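/- Let d ≥ 2 and let [[A, wᵗ],[v, c]] ∈ SO(d,ℝ) with c ≠ 0, z' := c^{-1}v. Then for every s ∈ ℝ the matrix identity Φ^{-s}·[[A, wᵗ],[v, c]]·n₊(−z') = [[c^{1/(d-1)}(A − wᵗz'), c^{-1}e^{ds}wᵗ],[0, 1]]·Φ^{-s + (log c)/(d-1)} holds, where Φ^{-s} = diag(e^{s}I_{d-1}, e^{-(d-1)s}) and n₊(x) = [[I_{d-1}, 0],[x, 1]]. (In particular the first factor on the right lies in the group H of block matrices [[B, bᵗ],[0,1]] with det B = 1, by det(A − wᵗz') = c^{-1}.) -/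

import Mathlib

open Matrix

def colv {n : ℕ} (b : Fin n → ℝ) : Matrix (Fin n) Unit ℝ := Matrix.of fun i _ => b i

def rowv {n : ℕ} (v : Fin n → ℝ) : Matrix Unit (Fin n) ℝ := Matrix.of fun _ j => v j

def scal (c : ℝ) : Matrix Unit Unit ℝ := Matrix.of fun _ _ => c

noncomputable def Phi (d : ℕ) (t : ℝ) : Matrix (Fin (d-1) ⊕ Unit) (Fin (d-1) ⊕ Unit) ℝ :=
  Matrix.fromBlocks (Real.exp (-t) • (1 : Matrix (Fin (d-1)) (Fin (d-1)) ℝ)) 0 0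
    (Matrix.of fun _ _ => Real.exp (((d : ℝ) - 1) * t))

noncomputable def nPlus (d : ℕ) (x : Fin (d-1) → ℝ) :
    Matrix (Fin (d-1) ⊕ Unit) (Fin (d-1) ⊕ Unit) ℝ :=
  Matrix.fromBlocks 1 0 (rowv x) 1

/-! Right multiplication by `n₊(-c⁻¹v)` clears the lower-left block `v` of `k`, and both `Φ`
factors are block scalar, so both sides are block upper triangular and agree block by block once
`c` is written as `exp ((d - 1) L)` with `L = log c / (d - 1)`. -/

namespace Matrix

variable {l m n o R : Type*} [Fintype l] [Fintype m] [DecidableEq l] [DecidableEq m] [CommRing R]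

theorem fromBlocks_mul_fromBlocks_one_zero_one (A : Matrix n l R) (B : Matrix n m R)
    (C : Matrix o l R) (D : Matrix o m R) (X : Matrix m l R) :
    fromBlocks A B C D * (fromBlocks 1 0 X 1 : Matrix (l ⊕ m) (l ⊕ m) R) =
      fromBlocks (A + B * X) B (C + D * X) D := by
  simp [fromBlocks_multiply, add_comm]

theorem fromBlocks_smul_one_mul_fromBlocks_zero (a b : R) (P : Matrix l n R)
    (Q : Matrix l o R) (S : Matrix m o R) :
    fromBlocks (a • 1 : Matrix l l R) 0 0 (b • 1 : Matrix m m R) * fromBlocks P Q 0 S =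
      fromBlocks (a • P) (a • Q) 0 (b • S) := by
  simp [fromBlocks_multiply]

theorem fromBlocks_zero_mul_fromBlocks_smul_one (a b : R) (P : Matrix n l R)
    (Q : Matrix n m R) (S : Matrix o m R) :
    fromBlocks P Q 0 S * fromBlocks (a • 1 : Matrix l l R) 0 0 (b • 1 : Matrix m m R) =
      fromBlocks (a • P) (b • Q) 0 (b • S) := by
  simp [fromBlocks_multiply]

end Matrix

open Real

theorem scal_eq_smul_one (c : ℝ) : scal c = c • 1 := by
  ext; simp [scal]

theorem scal_mul_rowv {n : ℕ} (c : ℝ) (x : Fin n → ℝ) : scal c * rowv x = rowv (c • x) := by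
  ext; simp [scal, rowv, mul_apply]

theorem Phi_eq_fromBlocks_smul_one (d : ℕ) (t : ℝ) :
    Phi d t = fromBlocks (exp (-t) • 1) 0 0 (exp (((d : ℝ) - 1) * t) • 1) := by
  rw [Phi, ← scal_eq_smul_one]; rfl

theorem fromBlocks_mul_nPlus_neg_inv_mul (d : ℕ) (A : Matrix (Fin (d-1)) (Fin (d-1)) ℝ)
    (w v : Fin (d-1) → ℝ) {c : ℝ} (hc : c ≠ 0) :
    fromBlocks A (colv w) (rowv v) (scal c) * nPlus d (fun i => -(c⁻¹ * v i)) =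
      fromBlocks (A - colv w * rowv (fun j => c⁻¹ * v j)) (colv w) 0 (scal c) := by
  rw [nPlus, fromBlocks_mul_fromBlocks_one_zero_one, scal_mul_rowv]
  congr 1
  · ext; simp [rowv, colv, mul_apply, sub_eq_add_neg]
  · ext; simp [rowv, hc]

theorem spherical_to_horospherical_coordinates_general (d : ℕ) (hd : 2 ≤ d)
    (k : Matrix (Fin (d-1) ⊕ Unit) (Fin (d-1) ⊕ Unit) ℝ)
    (A : Matrix (Fin (d-1)) (Fin (d-1)) ℝ) (w v : Fin (d-1) → ℝ) (c : ℝ)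
    (hblock : k = Matrix.fromBlocks A (colv w) (rowv v) (scal c))
    (hc : 0 < c)
    (s : ℝ) :
    Phi d (-s) * k * nPlus d (fun i => -(c⁻¹ * v i)) =
      Matrix.fromBlocks
        ((c ^ ((1 : ℝ) / ((d : ℝ) - 1))) • (A - colv w * rowv (fun j => c⁻¹ * v j)))
        ((c⁻¹ * Real.exp ((d : ℝ) * s)) • colv w) 0 1 *
      Phi d (-s + Real.log c / ((d : ℝ) - 1)) := by
  have hd₁ : (d : ℝ) - 1 ≠ 0 := by
    have : (2 : ℝ) ≤ d := by exact_mod_cast hd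
    linarith
  subst hblock
  rw [mul_assoc, fromBlocks_mul_nPlus_neg_inv_mul d A w v hc.ne', Phi_eq_fromBlocks_smul_one,
    Phi_eq_fromBlocks_smul_one, fromBlocks_smul_one_mul_fromBlocks_zero,
    fromBlocks_zero_mul_fromBlocks_smul_one, rpow_def_of_pos hc, mul_one_div, scal_eq_smul_one,
    smul_smul, smul_smul, smul_smul]
  set L := log c / ((d : ℝ) - 1)
  have hcL : exp (((d : ℝ) - 1) * L) = c := by rw [mul_div_cancel₀ _ hd₁, exp_log hc]
  rw [← hcL]
  congr 2
  all_goals simp only [← exp_neg, ← exp_add]; ring_nf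

/-- For `k = [[A, wᵗ],[v, c]] ∈ SO(d,ℝ)` with `c > 0` and `z' = c⁻¹v`:
`Φ^{-s} k n₊(−z') = [[c^{1/(d-1)}(A − wᵗz'), c⁻¹e^{ds}wᵗ],[0,1]] · Φ^{-s + (log c)/(d-1)}`. -/
theorem spherical_to_horospherical_coordinates (d : ℕ) (hd : 2 ≤ d)
    (k : Matrix (Fin (d-1) ⊕ Unit) (Fin (d-1) ⊕ Unit) ℝ)
    (A : Matrix (Fin (d-1)) (Fin (d-1)) ℝ) (w v : Fin (d-1) → ℝ) (c : ℝ)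
    (hblock : k = Matrix.fromBlocks A (colv w) (rowv v) (scal c))
    (horth : k * kᵀ = 1) (horth' : kᵀ * k = 1) (hdet : k.det = 1) (hc : 0 < c)
    (s : ℝ) :
    Phi d (-s) * k * nPlus d (fun i => -(c⁻¹ * v i)) =
      Matrix.fromBlocks
        ((c ^ ((1 : ℝ) / ((d : ℝ) - 1))) • (A - colv w * rowv (fun j => c⁻¹ * v j)))
        ((c⁻¹ * Real.exp ((d : ℝ) * s)) • colv w) 0 1 *
      Phi d (-s + Real.log c / ((d : ℝ) - 1)) :=
  spherical_to_horospherical_coordinates_general d hd k A w v c hblock hc s
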